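/- arXiv:2403.08138 — 2 statements merged into one kernel-verified Lean document; each statement's English description precedes it below -/
import Mathlib

section
/- Let a ∈ L^∞(𝔹^n) be a separately radial function, i.e., a(z) = a(|z_1|,...,|z_n|) for almost every z. Then the Toeplitz operator T_a is diagonal with respect to the orthonormal monomial basis of H^2_α(𝔹^n): for multi-indices m ≠ m', ⟨T_a e_m, e_{m'}⟩ = 0. -/
/-! Rotating the `i`-th coordinate by a unimodular `c` preserves `v_α` and, by separate radiality,
the symbol `a`, while it multiplies `e_m · conj e_{m'}` by `c ^ (m i - m' i)`. Since `m i ≠ m' i`,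
`c` can be chosen with `c ^ (m i - m' i) = -1`, so the integral equals its own negative. -/
noncomputable section
open MeasureTheory

/-- The open unit ball in `ℂⁿ`. -/
def cball (n : ℕ) : Set (Fin n → ℂ) := {z | ∑ i, ‖z i‖ ^ 2 < 1}

/-- Normalized Lebesgue measure `dv` on `ℂⁿ`, so that the unit ball has measure 1. -/
def dv (n : ℕ) : Measure (Fin n → ℂ) :=
  (ENNReal.ofReal ((n.factorial : ℝ) / Real.pi ^ n)) • volume

/-- The normalizing constant `c_α`. -/
def cA (n : ℕ) (α : ℝ) : ℝ :=
  Real.Gamma (n + α + 1) / ((n.factorial : ℝ) * Real.Gamma (α + 1))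

/-- The weighted measure `v_α = c_α (1-|z|²)^α dv(z)` on the unit ball. -/
def vA (n : ℕ) (α : ℝ) : Measure (Fin n → ℂ) :=
  ((dv n).restrict (cball n)).withDensity
    (fun z => ENNReal.ofReal (cA n α * (1 - ∑ i, ‖z i‖ ^ 2) ^ α))

/-- The monomial `z^m`. -/
def mon (n : ℕ) (m : Fin n → ℕ) : (Fin n → ℂ) → ℂ := fun z => ∏ i, z i ^ m i

/-- The normalized monomial `e_m`. -/
def eMon (n : ℕ) (α : ℝ) (m : Fin n → ℕ) : (Fin n → ℂ) → ℂ := fun z =>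
  (Real.sqrt (Real.Gamma (n + (∑ i, m i) + α + 1) /
      ((∏ i, (m i).factorial : ℕ) * Real.Gamma (n + α + 1))) : ℝ) * ∏ i, z i ^ m i

open ComplexConjugate

namespace MeasureTheory.MeasurePreserving

variable {X : Type*} [MeasurableSpace X] {μ : Measure X} {T : X → X}

theorem withDensity_of_comp_eq (hT : MeasurePreserving T μ μ) {ρ : X → ENNReal}
    (hρ : Measurable ρ) (hρT : ∀ x, ρ (T x) = ρ x) :
    MeasurePreserving T (μ.withDensity ρ) (μ.withDensity ρ) := by
  refine ⟨hT.measurable, Measure.ext fun s hs => ?_⟩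
  rw [Measure.map_apply hT.measurable hs, withDensity_apply _ hs,
    withDensity_apply _ (hT.measurable hs)]
  calc ∫⁻ x in T ⁻¹' s, ρ x ∂μ = ∫⁻ x in T ⁻¹' s, ρ (T x) ∂μ := by simp only [hρT]
    _ = ∫⁻ x in s, ρ x ∂μ := hT.setLIntegral_comp_preimage hs hρ

theorem integral_eq_zero_of_comp_eq_neg {E : Type*} [NormedAddCommGroup E] [NormedSpace ℝ E]
    (hT : MeasurePreserving T μ μ) (hTe : MeasurableEmbedding T) {f : X → E}
    (hfT : ∀ x, f (T x) = -f x) : ∫ x, f x ∂μ = 0 := by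
  have h := hT.integral_comp hTe f
  simp only [hfT, integral_neg] at h
  have := IsAddTorsionFree.of_isTorsionFree ℝ E
  exact neg_eq_self.mp h

end MeasureTheory.MeasurePreserving

theorem Circle.coe_pow_mul_conj_coe_pow (c : Circle) (p q : ℕ) :
    (c : ℂ) ^ p * conj ((c : ℂ) ^ q) = (c : ℂ) ^ ((p : ℤ) - q) := by
  rw [zpow_sub₀ c.coe_ne_zero, map_pow, ← Circle.coe_inv_eq_conj, Circle.coe_inv, zpow_natCast,
    zpow_natCast, inv_pow, div_eq_mul_inv]

theorem Circle.exists_coe_zpow_eq_neg_one {k : ℤ} (hk : k ≠ 0) : ∃ c : Circle, (c : ℂ) ^ k = -1 :=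
  ⟨Circle.exp (Real.pi / k), by
    rw [← Circle.coe_zpow, ← Circle.exp_zsmul, zsmul_eq_mul,
      mul_div_cancel₀ _ (by exact_mod_cast hk), Circle.coe_exp, Complex.exp_pi_mul_I]⟩

section RotateCoord

variable {ι : Type*} [DecidableEq ι]

def rotateCoord (i : ι) (c : Circle) : (ι → ℂ) ≃ᵐ (ι → ℂ) :=
  MeasurableEquiv.piCongrRight fun j =>
    if j = i then (rotation c).toHomeomorph.toMeasurableEquiv else MeasurableEquiv.refl ℂ

variable (i : ι) (c : Circle)

theorem rotateCoord_apply (z : ι → ℂ) (j : ι) :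
    rotateCoord i c z j = if j = i then (c : ℂ) * z j else z j := by
  by_cases h : j = i <;> simp [rotateCoord, MeasurableEquiv.piCongrRight, h]

theorem norm_rotateCoord_apply (z : ι → ℂ) (j : ι) : ‖rotateCoord i c z j‖ = ‖z j‖ := by
  by_cases h : j = i <;> simp [rotateCoord_apply, h, Circle.norm_coe]

theorem prod_rotateCoord_pow [Fintype ι] (z : ι → ℂ) (m : ι → ℕ) :
    ∏ j, rotateCoord i c z j ^ m j = (c : ℂ) ^ m i * ∏ j, z j ^ m j := by
  calc ∏ j, rotateCoord i c z j ^ m j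
      = ∏ j, (if j = i then (c : ℂ) ^ m j else 1) * z j ^ m j := by
        refine Finset.prod_congr rfl fun j _ => ?_
        by_cases h : j = i <;> simp [rotateCoord_apply, h, mul_pow]
    _ = (c : ℂ) ^ m i * ∏ j, z j ^ m j := by
        rw [Finset.prod_mul_distrib, Finset.prod_ite_eq' Finset.univ i, if_pos (Finset.mem_univ i)]

theorem measurePreserving_rotateCoord [Fintype ι] :
    MeasurePreserving (rotateCoord i c) volume volume := by
  refine volume_preserving_pi fun j => ?_
  by_cases h : j = i
  · simp only [h, ↓reduceIte]
    exact (rotation c).measurePreserving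
  · simp only [h, ↓reduceIte]
    exact MeasurePreserving.id volume

end RotateCoord

theorem measurableSet_cball (n : ℕ) : MeasurableSet (cball n) :=
  (isOpen_lt (by fun_prop) continuous_const).measurableSet

theorem preimage_rotateCoord_cball {n : ℕ} (i : Fin n) (c : Circle) :
    rotateCoord i c ⁻¹' cball n = cball n := by
  ext z
  simp only [cball, Set.mem_preimage, Set.mem_ofPred_eq, norm_rotateCoord_apply]

theorem measurePreserving_rotateCoord_vA (n : ℕ) (α : ℝ) (i : Fin n) (c : Circle) :
    MeasurePreserving (rotateCoord i c) (vA n α) (vA n α) := by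
  have hball := ((measurePreserving_rotateCoord i c).smul_measure
    (ENNReal.ofReal ((n.factorial : ℝ) / Real.pi ^ n))).restrict_preimage (measurableSet_cball n)
  rw [preimage_rotateCoord_cball] at hball
  refine hball.withDensity_of_comp_eq (by fun_prop) fun z => ?_
  simp only [norm_rotateCoord_apply]

theorem eMon_rotateCoord {n : ℕ} (α : ℝ) (m : Fin n → ℕ) (i : Fin n) (c : Circle)
    (z : Fin n → ℂ) :
    eMon n α m (rotateCoord i c z) = (c : ℂ) ^ m i * eMon n α m z := by
  simp only [eMon, prod_rotateCoord_pow]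
  ring

theorem toeplitz_sep_radial_diagonal_general (n : ℕ) (α : ℝ)
    (a : (Fin n → ℂ) → ℂ)
    (hrad : ∀ z w : Fin n → ℂ, (∀ i, ‖z i‖ = ‖w i‖) → a z = a w)
    (m m' : Fin n → ℕ) (hmm : m ≠ m') :
    ∫ z, a z * eMon n α m z * (starRingEnd ℂ) (eMon n α m' z) ∂(vA n α) = 0 := by
  obtain ⟨i, hi⟩ := Function.ne_iff.mp hmm
  obtain ⟨c, hc⟩ := Circle.exists_coe_zpow_eq_neg_one (k := (m i : ℤ) - m' i) (by omega)
  have hphase : (c : ℂ) ^ m i * conj ((c : ℂ) ^ m' i) = -1 :=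
    (c.coe_pow_mul_conj_coe_pow _ _).trans hc
  refine (measurePreserving_rotateCoord_vA n α i c).integral_eq_zero_of_comp_eq_neg
    (rotateCoord i c).measurableEmbedding fun z => ?_
  rw [hrad _ z (norm_rotateCoord_apply i c z), eMon_rotateCoord, eMon_rotateCoord, map_mul]
  linear_combination (a z * eMon n α m z * conj (eMon n α m' z)) * hphase

/-- A separately radial bounded symbol gives a Toeplitz operator that is diagonal with
respect to the orthonormal monomial basis: `⟨T_a e_m, e_{m'}⟩ = ∫ a e_m conj(e_{m'}) dv_α = 0`
for `m ≠ m'`. -/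
theorem toeplitz_sep_radial_diagonal (n : ℕ) (α : ℝ) (hα : -1 < α)
    (a : (Fin n → ℂ) → ℂ) (hmeas : Measurable a) (hbd : ∃ C, ∀ z, ‖a z‖ ≤ C)
    (hrad : ∀ z w : Fin n → ℂ, (∀ i, ‖z i‖ = ‖w i‖) → a z = a w)
    (m m' : Fin n → ℕ) (hmm : m ≠ m') :
    ∫ z, a z * eMon n α m z * (starRingEnd ℂ) (eMon n α m' z) ∂(vA n α) = 0 :=
  toeplitz_sep_radial_diagonal_general n α a hrad m m' hmm
end
end

section
/- There exist k_1 > k_2 ≥ 0 and k_3 with k_1 + k_2 = 2k_3 such that for a_0(z) = |z_1|^2|z_2|^2 on 𝔹^2 the eigenvalues satisfy γ_{a_0}(k_1,k_2) ≠ γ_{a_0}(k_3,k_3), where γ_{a_0}(k_1,k_2) = (k_1+1)(k_2+1)/((k_1+k_2+α+4)(k_1+k_2+α+3)); hence the eigenvalue function of a symmetric separately radial Toeplitz operator need not depend only on |m|. -/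
/-- There exist `k₁ > k₂ ≥ 0` and `k₃` with `k₁ + k₂ = 2k₃` such that the eigenvalues
`γ_{a₀}(k₁,k₂) = (k₁+1)(k₂+1)/((k₁+k₂+α+4)(k₁+k₂+α+3))` of the Toeplitz operator with
symbol `a₀(z) = |z₁|²|z₂|²` satisfy `γ_{a₀}(k₁,k₂) ≠ γ_{a₀}(k₃,k₃)`: the eigenvalue
function of a symmetric separately radial Toeplitz operator need not depend only on `|m|`. -/
theorem gamma_not_radial (α : ℝ) (hα : -1 < α) :
    ∃ k₁ k₂ k₃ : ℕ, k₂ < k₁ ∧ k₁ + k₂ = 2 * k₃ ∧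
      ((k₁ + 1) * (k₂ + 1) / ((k₁ + k₂ + α + 4) * (k₁ + k₂ + α + 3)) : ℝ) ≠
        ((k₃ + 1) * (k₃ + 1) / ((k₃ + k₃ + α + 4) * (k₃ + k₃ + α + 3)) : ℝ) := by
  -- `γ(2, 0) = 3 / D` and `γ(1, 1) = 4 / D` share the denominator `D = (α + 6)(α + 5) ≠ 0`.
  refine ⟨2, 0, 1, by norm_num, by norm_num, ?_⟩
  have hD : ((2 : ℝ) + 0 + α + 4) * (2 + 0 + α + 3) ≠ 0 :=
    mul_ne_zero (by linarith) (by linarith)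
  push_cast
  rw [show (1 : ℝ) + 1 = 2 + 0 by norm_num, Ne, div_left_inj' hD]
  norm_num
end
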